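/- Consider the abstraction of Gripper: states are triples (r_B, c, b) with r_B ∈ Bool (robot at room B), c ∈ ℕ (balls carried), b ∈ ℕ (balls not in B). The policy given by rules r1: (¬r_B, c=0, b>0) ↦ increase c; r2: (r_B, c=0, b>0) ↦ set r_B false; r3: (r_B, c>0, b>0) ↦ decrease c and decrease b; r4: (¬r_B, c>0, b>0) ↦ set r_B true, applied to the transition system where picks increase c by 1 (only in room A, with a ball present there), drops in B decrease c and b by 1, and moves flip r_B, is descending over the tuple (b_A, b_{RA}, b_{RB}, r_B) and complete, hence it reaches the goal b=0 from every reachable state. -/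

import Mathlib

/-- Ball locations in Gripper: room A, room B, or held by the robot. -/
inductive GLoc | A | B | Held
deriving DecidableEq

/-- A Gripper state: location of each of the k balls, and whether the robot is at B. -/
structure GState (k : ℕ) where
  loc : Fin k → GLoc
  atB : Bool

/-- Number of balls held by the robot (feature c). -/
def heldCount {k : ℕ} (s : GState k) : ℕ :=
  (Finset.univ.filter fun i => s.loc i = GLoc.Held).card

/-- Number of balls in room A (feature b_A). -/
def ballsA {k : ℕ} (s : GState k) : ℕ :=
  (Finset.univ.filter fun i => s.loc i = GLoc.A).card

/-- Number of balls not yet in room B (feature b). -/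
def ballsNotB {k : ℕ} (s : GState k) : ℕ :=
  (Finset.univ.filter fun i => s.loc i ≠ GLoc.B).card

/-- Gripper transitions: move (flip room), pick a ball in room A while there,
or drop a held ball in the current room. -/
def GTrans {k : ℕ} (s t : GState k) : Prop :=
  (t.loc = s.loc ∧ t.atB = !s.atB) ∨
  (∃ i, s.atB = false ∧ s.loc i = GLoc.A ∧ heldCount s < 2 ∧
    t.atB = s.atB ∧ t.loc = Function.update s.loc i GLoc.Held) ∨
  (∃ i, s.loc i = GLoc.Held ∧ t.atB = s.atB ∧
    t.loc = Function.update s.loc i (if s.atB then GLoc.B else GLoc.A))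

/-- Policy-compatible transitions: rules
r1: (¬r_B, c=0, b>0) ↦ c↑;  r2: (r_B, c=0, b>0) ↦ ¬r_B;
r3: (r_B, c>0, b>0) ↦ c↓, b↓;  r4: (¬r_B, c>0, b>0) ↦ r_B. -/
def GCompat {k : ℕ} (s t : GState k) : Prop :=
  GTrans s t ∧
  ((s.atB = false ∧ heldCount s = 0 ∧ 0 < ballsNotB s ∧
      heldCount s < heldCount t ∧ t.atB = false ∧ ballsNotB t = ballsNotB s) ∨
   (s.atB = true ∧ heldCount s = 0 ∧ 0 < ballsNotB s ∧
      t.atB = false ∧ heldCount t = heldCount s ∧ ballsNotB t = ballsNotB s) ∨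
   (s.atB = true ∧ 0 < heldCount s ∧ 0 < ballsNotB s ∧
      heldCount t < heldCount s ∧ ballsNotB t < ballsNotB s ∧ t.atB = true) ∨
   (s.atB = false ∧ 0 < heldCount s ∧ 0 < ballsNotB s ∧
      t.atB = true ∧ heldCount t = heldCount s ∧ ballsNotB t = ballsNotB s))

/-- Held balls while robot is in room A. -/
def bRA {k : ℕ} (s : GState k) : ℕ := if s.atB then 0 else heldCount s

/-- Held balls while robot is in room B. -/
def bRB {k : ℕ} (s : GState k) : ℕ := if s.atB then heldCount s else 0

/-- 0/1 value of the boolean feature r_B. -/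
def rBval {k : ℕ} (s : GState k) : ℕ := if s.atB then 1 else 0

/-- The feature tuple (b_A, b_RA, b_RB, r_B), compared lexicographically. -/
def gMeasure {k : ℕ} (s : GState k) : ℕ ×ₗ ℕ ×ₗ ℕ ×ₗ ℕ :=
  toLex (ballsA s, toLex (bRA s, toLex (bRB s, rBval s)))


section Aux

variable {k : ℕ}

lemma notB_split (s : GState k) : ballsNotB s = ballsA s + heldCount s := by
  unfold ballsNotB ballsA heldCount
  rw [← Finset.card_union_of_disjoint]
  · congr 1
    ext i
    simp only [Finset.mem_filter, Finset.mem_union, Finset.mem_univ, true_and]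
    cases h : s.loc i <;> simp
  · rw [Finset.disjoint_filter]
    intro i _ h h'
    rw [h] at h'; exact absurd h' (by simp)

lemma filter_update_congr (f : Fin k → GLoc) (i : Fin k) (v : GLoc)
    (p : GLoc → Prop) [DecidablePred p] (h : p (f i) ↔ p v) :
    (Finset.univ.filter fun j => p (Function.update f i v j)) =
      Finset.univ.filter fun j => p (f j) := by
  ext j
  by_cases hj : j = i
  · subst hj
    simp only [Finset.mem_filter, Finset.mem_univ, true_and, Function.update_self]
    exact h.symm
  · simp [Function.update_of_ne hj]

lemma filter_update_insert (f : Fin k → GLoc) (i : Fin k) (v : GLoc)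
    (p : GLoc → Prop) [DecidablePred p] (h1 : ¬ p (f i)) (h2 : p v) :
    (Finset.univ.filter fun j => p (Function.update f i v j)) =
      insert i (Finset.univ.filter fun j => p (f j)) := by
  ext j
  by_cases hj : j = i
  · subst hj; simp [Function.update_self, h2]
  · simp [Function.update_of_ne hj, hj]

lemma filter_update_erase (f : Fin k → GLoc) (i : Fin k) (v : GLoc)
    (p : GLoc → Prop) [DecidablePred p] (h1 : p (f i)) (h2 : ¬ p v) :
    insert i (Finset.univ.filter fun j => p (Function.update f i v j)) =
      Finset.univ.filter fun j => p (f j) := by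
  ext j
  by_cases hj : j = i
  · subst hj; simp [Function.update_self, h1]
  · simp [Function.update_of_ne hj, hj]

/-- Picking a ball from A increments heldCount. -/
lemma heldCount_pick (s t : GState k) (i : Fin k) (hi : s.loc i = GLoc.A)
    (ht : t.loc = Function.update s.loc i GLoc.Held) :
    heldCount t = heldCount s + 1 := by
  unfold heldCount
  rw [ht, filter_update_insert s.loc i GLoc.Held (fun x => x = GLoc.Held) (by simp [hi]) rfl,
    Finset.card_insert_of_notMem (by simp [hi])]

/-- Picking a ball from A keeps ballsNotB. -/
lemma ballsNotB_pick (s t : GState k) (i : Fin k) (hi : s.loc i = GLoc.A)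
    (ht : t.loc = Function.update s.loc i GLoc.Held) :
    ballsNotB t = ballsNotB s := by
  unfold ballsNotB
  rw [ht, filter_update_congr s.loc i GLoc.Held (fun x => x ≠ GLoc.B) (by simp [hi])]

/-- Dropping a ball in B decrements heldCount. -/
lemma heldCount_drop (s t : GState k) (i : Fin k) (hi : s.loc i = GLoc.Held)
    (ht : t.loc = Function.update s.loc i GLoc.B) :
    heldCount t + 1 = heldCount s := by
  unfold heldCount
  rw [ht, ← filter_update_erase s.loc i GLoc.B (fun x => x = GLoc.Held) (by simp [hi]) (by simp),
    Finset.card_insert_of_notMem (by simp [Function.update_self]),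
    Nat.add_comm]

/-- Dropping a ball in B decrements ballsNotB. -/
lemma ballsNotB_drop (s t : GState k) (i : Fin k) (hi : s.loc i = GLoc.Held)
    (ht : t.loc = Function.update s.loc i GLoc.B) :
    ballsNotB t + 1 = ballsNotB s := by
  unfold ballsNotB
  rw [ht, ← filter_update_erase s.loc i GLoc.B (fun x => x ≠ GLoc.B) (by simp [hi]) (by simp),
    Finset.card_insert_of_notMem (by simp [Function.update_self]),
    Nat.add_comm]

/-- Dropping a ball in B keeps ballsA. -/
lemma ballsA_drop (s t : GState k) (i : Fin k) (hi : s.loc i = GLoc.Held)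
    (ht : t.loc = Function.update s.loc i GLoc.B) :
    ballsA t = ballsA s := by
  unfold ballsA
  rw [ht, filter_update_congr s.loc i GLoc.B (fun x => x = GLoc.A) (by simp [hi])]

lemma descending (s t : GState k) (h : GCompat s t) : gMeasure t < gMeasure s := by
  obtain ⟨htr, hrule⟩ := h
  have hs := notB_split s
  have hts := notB_split t
  rw [gMeasure, gMeasure, Prod.Lex.lt_iff]
  rcases hrule with ⟨hB, hc0, hbpos, hct, htB, hbt⟩ |
    ⟨hB, hc0, hbpos, htB, hct, hbt⟩ |
    ⟨hB, hcpos, hbpos, hct, hbt, htB⟩ |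
    ⟨hB, hcpos, hbpos, htB, hct, hbt⟩
  · -- r1: pick in A, ballsA decreases
    left; simp only [ofLex_toLex]; omega
  · -- r2: move B → A with empty gripper
    right
    constructor
    · simp only [ofLex_toLex]; omega
    rw [Prod.Lex.lt_iff]
    right
    refine ⟨by simp [bRA, hB, htB, hc0, hct], ?_⟩
    rw [Prod.Lex.lt_iff]
    right
    refine ⟨by simp [bRB, hB, htB, hc0], ?_⟩
    simp [rBval, hB, htB]
  · -- r3: drop in B
    rcases htr with ⟨hl, _⟩ | ⟨i, hf, _⟩ | ⟨i, hi, _, hl⟩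
    · exfalso; have : heldCount t = heldCount s := by unfold heldCount; rw [hl]
      omega
    · rw [hB] at hf; exact absurd hf (by simp)
    · rw [hB] at hl
      right
      refine ⟨by rw [ballsA_drop s t i hi hl]; rfl, ?_⟩
      rw [Prod.Lex.lt_iff]
      right
      refine ⟨by simp [bRA, hB, htB], ?_⟩
      rw [Prod.Lex.lt_iff]
      left
      simpa [bRB, hB, htB] using hct
  · -- r4: move A → B carrying
    rcases htr with ⟨hl, _⟩ | ⟨i, _, _, _, hta, _⟩ | ⟨i, _, hta, _⟩
    · right
      refine ⟨by unfold ballsA; rw [hl]; rfl, ?_⟩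
      rw [Prod.Lex.lt_iff]
      left
      simpa [bRA, hB, htB] using hcpos
    · rw [hB] at hta; rw [hta] at htB; exact absurd htB (by simp)
    · rw [hB] at hta; rw [hta] at htB; exact absurd htB (by simp)

lemma complete (s : GState k) (hb : 0 < ballsNotB s) : ∃ t, GCompat s t := by
  have hs := notB_split s
  cases hA : s.atB
  · rcases Nat.eq_zero_or_pos (heldCount s) with hc | hc
    · -- pick a ball in A
      have hApos : 0 < ballsA s := by omega
      obtain ⟨i, hi⟩ := Finset.card_pos.mp hApos
      rw [Finset.mem_filter] at hi
      have hiA := hi.2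
      refine ⟨⟨Function.update s.loc i GLoc.Held, false⟩, ?_, ?_⟩
      · exact Or.inr (Or.inl ⟨i, hA, hiA, by omega, by rw [hA], rfl⟩)
      · left
        have h1 := heldCount_pick s ⟨Function.update s.loc i GLoc.Held, false⟩ i hiA rfl
        have h2 := ballsNotB_pick s ⟨Function.update s.loc i GLoc.Held, false⟩ i hiA rfl
        exact ⟨hA, hc, hb, by omega, rfl, h2⟩
    · -- move to B
      refine ⟨⟨s.loc, true⟩, Or.inl ⟨rfl, by simp [hA]⟩, ?_⟩
      right; right; right
      exact ⟨hA, hc, hb, rfl, rfl, rfl⟩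
  · rcases Nat.eq_zero_or_pos (heldCount s) with hc | hc
    · -- move to A
      refine ⟨⟨s.loc, false⟩, Or.inl ⟨rfl, by simp [hA]⟩, ?_⟩
      right; left
      exact ⟨hA, hc, hb, rfl, rfl, rfl⟩
    · -- drop in B
      obtain ⟨i, hi⟩ := Finset.card_pos.mp hc
      rw [Finset.mem_filter] at hi
      have hiH := hi.2
      refine ⟨⟨Function.update s.loc i GLoc.B, true⟩, ?_, ?_⟩
      · exact Or.inr (Or.inr ⟨i, hiH, by simp [hA], by simp [hA]⟩)
      · right; right; left
        have h1 := heldCount_drop s ⟨Function.update s.loc i GLoc.B, true⟩ i hiH rfl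
        have h2 := ballsNotB_drop s ⟨Function.update s.loc i GLoc.B, true⟩ i hiH rfl
        exact ⟨hA, hc, hb, by omega, by omega, rfl⟩

end Aux

/-- The Gripper policy is descending over (b_A, b_RA, b_RB, r_B)
and complete, hence it reaches the goal b = 0 from every state. -/
theorem stmt7 (k : ℕ) :
    (∀ s t : GState k, GCompat s t → gMeasure t < gMeasure s) ∧
    (∀ s : GState k, 0 < ballsNotB s → ∃ t, GCompat s t) ∧
    (∀ (n : ℕ) (f : ℕ → GState k),
      (∀ i, i < n → GCompat (f i) (f (i+1))) →
      (¬ ∃ t, GCompat (f n) t) → ballsNotB (f n) = 0) ∧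
    (¬ ∃ f : ℕ → GState k, ∀ i, GCompat (f i) (f (i+1))) := by
  refine ⟨descending, complete, ?_, ?_⟩
  · intro n f _ hstuck
    by_contra h
    exact hstuck (complete _ (Nat.pos_of_ne_zero h))
  · rintro ⟨f, hf⟩
    exact (RelEmbedding.natGT (fun n => gMeasure (f n))
      (fun n => descending _ _ (hf n))).not_wellFounded wellFounded_lt
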